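/- Let X be a Banach space and f : X → ℝ ∪ {+∞} proper, convex, lower semicontinuous. Then the subdifferential ∂f is a maximal monotone operator from X to X*: if (y, q) ∈ X × X* satisfies (p − q)(x − y) ≥ 0 for all x ∈ X and p ∈ ∂f(x), then q ∈ ∂f(y). -/

import Mathlib

/-!
The function `φ = f + ½‖· - y‖² - q` is lower semicontinuous and bounded below (a proper
convex lsc function has a continuous affine minorant, by Hahn–Banach). Ekeland's principle
gives, for every `ε > 0`, a point `w` minimising `φ + ε‖· - w‖`; separating the epigraph of `f`
from the strict hypograph of the concave function this minimality puts below `f` yields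
`p ∈ ∂f(w)` with `-p` a subgradient of `½‖· - y‖² - q + ε‖· - w‖` at `w`. Together with
`(p - q)(w - y) ≥ 0` this forces `‖w - y‖ ≤ ε` and `‖p - q‖ ≤ 2ε`. So `(y, q)` lies in the
closure of the graph of `∂f`, which is closed since `f` is lower semicontinuous.
-/

open Set

variable {X : Type*} [NormedAddCommGroup X] [NormedSpace ℝ X] [CompleteSpace X]

/-- The convex subdifferential of an extended-real-valued function. -/
def Subdiff (f : X → EReal) (x : X) : Set (X →L[ℝ] ℝ) :=
  {p | ∀ y : X, f x + ((p (y - x) : ℝ) : EReal) ≤ f y}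

/-- The ε-subdifferential. -/
def EpsSubdiff (f : X → EReal) (ε : ℝ) (x : X) : Set (X →L[ℝ] ℝ) :=
  {p | ∀ y : X, f x + ((p (y - x) - ε : ℝ) : EReal) ≤ f y}

/-- f is proper: never -∞ and not identically +∞. -/
def EProper (f : X → EReal) : Prop := (∃ x, f x ≠ ⊤) ∧ ∀ x, f x ≠ ⊥

/-- Convexity of an extended-real-valued function. -/
def EConvex (f : X → EReal) : Prop :=
  ∀ x y : X, ∀ t : ℝ, 0 ≤ t → t ≤ 1 →
    f (t • x + (1 - t) • y) ≤ ((t : ℝ) : EReal) * f x + (((1 - t : ℝ)) : EReal) * f y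

open Filter Topology

section Ekeland

variable {Y : Type*} [MetricSpace Y] {ψ : Y → ℝ} {lam : ℝ}

def ekelandSet (ψ : Y → ℝ) (lam : ℝ) (x : Y) : Set Y :=
  {z | ψ z + lam * dist z x ≤ ψ x}

theorem mem_ekelandSet_self (x : Y) : x ∈ ekelandSet ψ lam x := by
  simp [ekelandSet]

theorem ekelandSet_subset (hlam : 0 ≤ lam) {x z : Y} (hz : z ∈ ekelandSet ψ lam x) :
    ekelandSet ψ lam z ⊆ ekelandSet ψ lam x := fun w hw => by
  have := mul_le_mul_of_nonneg_left (dist_triangle w z x) hlam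
  simp only [ekelandSet, mem_ofPred_eq] at hz hw ⊢
  linarith

theorem isClosed_ekelandSet (hψ : LowerSemicontinuous ψ) (x : Y) :
    IsClosed (ekelandSet ψ lam x) :=
  (hψ.add (continuous_const.mul (continuous_id.dist continuous_const)).lowerSemicontinuous
    ).isClosed_preimage (ψ x)

theorem exists_le_add_of_bddBelow {α : Type*} {f : α → ℝ} {s : Set α} (hs : s.Nonempty)
    (hf : BddBelow (f '' s)) {δ : ℝ} (hδ : 0 < δ) : ∃ z ∈ s, ∀ w ∈ s, f z ≤ f w + δ := by
  obtain ⟨_, ⟨z, hz, rfl⟩, hlt⟩ := Real.lt_sInf_add_pos (hs.image f) hδ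
  exact ⟨z, hz, fun w hw => hlt.le.trans (by gcongr; exact csInf_le hf (mem_image_of_mem f hw))⟩

theorem mul_dist_le_of_mem_ekelandSet (hlam : 0 ≤ lam) {x z w : Y} {δ : ℝ}
    (hz : z ∈ ekelandSet ψ lam x) (hmin : ∀ w ∈ ekelandSet ψ lam x, ψ z ≤ ψ w + δ)
    (hw : w ∈ ekelandSet ψ lam z) : lam * dist w z ≤ δ := by
  have := hmin w (ekelandSet_subset hlam hz hw)
  simp only [ekelandSet, mem_ofPred_eq] at hw
  linarith

/-- Ekeland's variational principle. -/
theorem exists_forall_le_add_mul_dist [CompleteSpace Y] (hψ : LowerSemicontinuous ψ)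
    (hb : BddBelow (range ψ)) (hlam : 0 < lam) (x₀ : Y) :
    ∃ v, ψ v ≤ ψ x₀ ∧ ∀ x, ψ v ≤ ψ x + lam * dist x v := by
  have hstep (n : ℕ) (x : Y) : ∃ z ∈ ekelandSet ψ lam x,
      ∀ w ∈ ekelandSet ψ lam x, ψ z ≤ ψ w + lam * (1 / 2) ^ n :=
    exists_le_add_of_bddBelow ⟨x, mem_ekelandSet_self x⟩ (hb.mono (image_subset_range _ _))
      (by positivity)
  choose next hnext_mem hnext_min using hstep
  -- Each `u (n + 1)` almost minimises `ψ` on `ekelandSet ψ lam (u n)`, so these nested closed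
  -- sets shrink to a single point.
  let u : ℕ → Y := fun n => Nat.rec x₀ next n
  have hanti : Antitone fun n => ekelandSet ψ lam (u n) :=
    antitone_nat_of_succ_le fun n => ekelandSet_subset hlam.le (hnext_mem n (u n))
  have hsmall (n : ℕ) : ∀ w ∈ ekelandSet ψ lam (u (n + 1)), dist w (u (n + 1)) ≤ (1 / 2) ^ n :=
    fun w hw => le_of_mul_le_mul_left
      (mul_dist_le_of_mem_ekelandSet hlam.le (hnext_mem n (u n)) (hnext_min n (u n)) hw) hlam
  have hgeom : Tendsto (fun n : ℕ => (1 / 2 : ℝ) ^ n) atTop (𝓝 0) :=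
    tendsto_pow_atTop_nhds_zero_of_lt_one (by norm_num) (by norm_num)
  have hlim (x : Y) (hx : ∀ n, x ∈ ekelandSet ψ lam (u n)) :
      Tendsto (fun n => u (n + 1)) atTop (𝓝 x) :=
    tendsto_iff_dist_tendsto_zero.2 <| squeeze_zero (fun _ => dist_nonneg)
      (fun n => by rw [dist_comm]; exact hsmall n x (hx (n + 1))) hgeom
  have hcauchy : CauchySeq fun n => u (n + 1) :=
    cauchySeq_of_le_tendsto_0' _ (fun n m hnm => by
      rw [dist_comm]
      exact hsmall n _ (hanti (show n + 1 ≤ m + 1 by omega) (mem_ekelandSet_self _))) hgeom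
  obtain ⟨v, hv⟩ := cauchySeq_tendsto_of_complete hcauchy
  have hvS (n : ℕ) : v ∈ ekelandSet ψ lam (u n) :=
    (isClosed_ekelandSet hψ _).mem_of_tendsto hv
      (eventually_atTop.2 ⟨n, fun m hm =>
        hanti (show n ≤ m + 1 by omega) (mem_ekelandSet_self _)⟩)
  refine ⟨v, ?_, fun x => ?_⟩
  · have h0 : ψ v + lam * dist v x₀ ≤ ψ x₀ := hvS 0
    nlinarith [dist_nonneg (x := v) (y := x₀)]
  · by_contra! hx
    have hxS : x ∈ ekelandSet ψ lam v := hx.le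
    obtain rfl : x = v :=
      tendsto_nhds_unique (hlim x fun n => ekelandSet_subset hlam.le (hvS n) hxS) hv
    simp at hx

theorem lowerSemicontinuous_of_coe_ereal {α : Type*} [TopologicalSpace α] {g : α → ℝ}
    (hg : LowerSemicontinuous fun x => (g x : EReal)) : LowerSemicontinuous g :=
  fun x c hc => (hg x c (EReal.coe_lt_coe_iff.2 hc)).mono fun _ => EReal.coe_lt_coe_iff.1

theorem exists_forall_le_add_mul_dist_ereal [CompleteSpace Y] {φ : Y → EReal}
    (hφ : LowerSemicontinuous φ) {m : ℝ} (hb : ∀ x, (m : EReal) ≤ φ x) (hlam : 0 < lam)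
    {x₀ : Y} (hx₀ : φ x₀ ≠ ⊤) :
    ∃ v, φ v ≤ φ x₀ ∧ ∀ x, φ v ≤ φ x + ((lam * dist x v : ℝ) : EReal) := by
  -- Truncating at `C` does not change `φ` on its sublevel set at `x₀`.
  set C : ℝ := (φ x₀).toReal + 1
  have hφx₀ : φ x₀ = ((φ x₀).toReal : EReal) :=
    (EReal.coe_toReal hx₀ fun h => by simpa [h] using hb x₀).symm
  have hmin_ge (x : Y) : ((min m C : ℝ) : EReal) ≤ min (φ x) C :=
    le_min ((EReal.coe_le_coe_iff.2 (min_le_left _ _)).trans (hb x))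
      (EReal.coe_le_coe_iff.2 (min_le_right _ _))
  set ψ : Y → ℝ := fun x => (min (φ x) C).toReal
  have hψ (x : Y) : (ψ x : EReal) = min (φ x) C :=
    EReal.coe_toReal (ne_top_of_le_ne_top (EReal.coe_ne_top C) (min_le_right _ _))
      (ne_bot_of_le_ne_bot (EReal.coe_ne_bot _) (hmin_ge x))
  have hψlsc : LowerSemicontinuous ψ := lowerSemicontinuous_of_coe_ereal <| by
    simpa only [hψ] using hφ.inf lowerSemicontinuous_const
  have hψb : BddBelow (range ψ) :=
    ⟨min m C, by rintro _ ⟨x, rfl⟩; exact EReal.coe_le_coe_iff.1 ((hψ x).symm ▸ hmin_ge x)⟩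
  obtain ⟨v, hv₀, hv⟩ := exists_forall_le_add_mul_dist hψlsc hψb hlam x₀
  have hψx₀ : (ψ x₀ : EReal) = φ x₀ := by
    rw [hψ, min_eq_left]
    rw [hφx₀, EReal.coe_le_coe_iff]
    linarith
  have hψv : (ψ v : EReal) = φ v := by
    rw [hψ, min_eq_left]
    by_contra! h
    have : ψ v = C := by simp [ψ, min_eq_right h.le]
    have : ψ x₀ = (φ x₀).toReal := by rw [← EReal.coe_eq_coe_iff, hψx₀, ← hφx₀]
    linarith
  refine ⟨v, ?_, fun x => ?_⟩
  · rw [← hψv, ← hψx₀]; exact EReal.coe_le_coe_iff.2 hv₀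
  · calc φ v = ψ v := hψv.symm
      _ ≤ ((ψ x + lam * dist x v : ℝ) : EReal) := EReal.coe_le_coe_iff.2 (hv x)
      _ = (ψ x : EReal) + ((lam * dist x v : ℝ) : EReal) := EReal.coe_add _ _
      _ ≤ φ x + ((lam * dist x v : ℝ) : EReal) := by
        gcongr; rw [hψ]; exact min_le_left _ _

end Ekeland

theorem LowerSemicontinuous.add_coe_of_continuous {α : Type*} [TopologicalSpace α]
    {f : α → EReal} (hf : LowerSemicontinuous f) {g : α → ℝ} (hg : Continuous g) :
    LowerSemicontinuous fun x => f x + (g x : EReal) :=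
  hf.add' (continuous_coe_real_ereal.comp hg).lowerSemicontinuous fun _ =>
    EReal.continuousAt_add (Or.inr (EReal.coe_ne_bot _)) (Or.inr (EReal.coe_ne_top _))

theorem EReal.coe_le_of_forall_le_coe {a : ℝ} {e : EReal} (h : ∀ r : ℝ, e ≤ r → a ≤ r) :
    (a : EReal) ≤ e :=
  EReal.le_of_forall_lt_iff_le.1 fun r hr => EReal.coe_le_coe_iff.2 (h r hr.le)

theorem EReal.coe_sub_le_iff {a b : ℝ} {e : EReal} :
    ((a - b : ℝ) : EReal) ≤ e ↔ a ≤ e + b := by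
  rw [EReal.coe_sub]
  exact EReal.sub_le_iff_le_add (Or.inl (EReal.coe_ne_bot b)) (Or.inl (EReal.coe_ne_top b))

section Separation

variable {E : Type*} [NormedAddCommGroup E] [NormedSpace ℝ E]

def realEpigraph {α : Type*} (f : α → EReal) : Set (α × ℝ) := {p | f p.1 ≤ p.2}

theorem EConvex.convex_realEpigraph {f : E → EReal} (hf : EConvex f) :
    Convex ℝ (realEpigraph f) := by
  rintro ⟨x, r⟩ hx ⟨x', r'⟩ hx' a b ha hb hab
  obtain rfl : b = 1 - a := by linarith
  show f (a • x + (1 - a) • x') ≤ ((a * r + (1 - a) * r' : ℝ) : EReal)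
  calc f (a • x + (1 - a) • x') ≤ (a : EReal) * f x + ((1 - a : ℝ) : EReal) * f x' :=
        hf x x' a ha (by linarith)
    _ ≤ (a : EReal) * r + ((1 - a : ℝ) : EReal) * r' := by
        gcongr
        exacts [hx, hx']
    _ = ((a * r + (1 - a) * r' : ℝ) : EReal) := by norm_cast

theorem LowerSemicontinuous.isClosed_realEpigraph {α : Type*} [TopologicalSpace α]
    {f : α → EReal} (hf : LowerSemicontinuous f) : IsClosed (realEpigraph f) :=
  hf.isClosed_epigraph.preimage
    (continuous_fst.prodMk (continuous_coe_real_ereal.comp continuous_snd))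

theorem ContinuousLinearMap.apply_prod_real (F : E × ℝ →L[ℝ] ℝ) (x : E) (r : ℝ) :
    F (x, r) = F.comp (ContinuousLinearMap.inl ℝ E ℝ) x + r * F (0, 1) := by
  have : ((x, r) : E × ℝ) = (x, 0) + r • (0, 1) := by simp
  rw [this, map_add, map_smul, smul_eq_mul]
  rfl

theorem EProper.exists_affine_le {f : E → EReal} (hf : EProper f) (hconv : EConvex f)
    (hlsc : LowerSemicontinuous f) :
    ∃ (l : E →L[ℝ] ℝ) (c : ℝ), ∀ x, ((l x + c : ℝ) : EReal) ≤ f x := by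
  obtain ⟨⟨x₁, hx₁⟩, hnb⟩ := hf
  set r₁ := (f x₁).toReal
  have hfx₁ : f x₁ = r₁ := (EReal.coe_toReal hx₁ (hnb x₁)).symm
  have hout : (x₁, r₁ - 1) ∉ realEpigraph f := by
    show ¬ f x₁ ≤ ((r₁ - 1 : ℝ) : EReal)
    rw [hfx₁, EReal.coe_le_coe_iff]
    linarith
  obtain ⟨F, u, hepi, hpt⟩ := geometric_hahn_banach_closed_point hconv.convex_realEpigraph
    hlsc.isClosed_realEpigraph hout
  set l := F.comp (ContinuousLinearMap.inl ℝ E ℝ)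
  set c := F (0, 1)
  have hc : c < 0 := by
    have := hepi (x₁, r₁) hfx₁.le
    rw [F.apply_prod_real] at this hpt
    linarith
  refine ⟨-c⁻¹ • l, u / c, fun x => EReal.coe_le_of_forall_le_coe fun r hr => ?_⟩
  have := hepi (x, r) hr
  rw [F.apply_prod_real] at this
  have : (-c⁻¹ • l) x + u / c = (u - l x) / c := by
    simp only [smul_apply, smul_eq_mul]; field_simp; ring
  rw [this, div_le_iff_of_neg hc]
  linarith

theorem exists_mem_subdiff_of_concaveOn_le {f : E → EReal} (hf : Convex ℝ (realEpigraph f))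
    {k : E → ℝ} (hk : ConcaveOn ℝ univ k) (hkc : Continuous k) (hkf : ∀ x, (k x : EReal) ≤ f x)
    {w : E} (hw : f w = k w) : ∃ p ∈ Subdiff f w, ∀ x, k x ≤ k w + p (x - w) := by
  set B : Set (E × ℝ) := {p | p.2 < k p.1}
  have hBconv : Convex ℝ B := by simpa using hk.convex_strict_hypograph
  have hBopen : IsOpen B := isOpen_lt continuous_snd (hkc.comp continuous_fst)
  have hdisj : Disjoint B (realEpigraph f) := by
    refine Set.disjoint_left.2 ?_
    rintro ⟨x, r⟩ (hB : r < k x) (hA : f x ≤ r)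
    exact (hA.trans_lt ((EReal.coe_lt_coe_iff.2 hB).trans_le (hkf x))).false
  obtain ⟨F, u, hFB, hFA⟩ := geometric_hahn_banach_open hBconv hBopen hf hdisj
  set l := F.comp (ContinuousLinearMap.inl ℝ E ℝ)
  set c := F (0, 1)
  have hA (x : E) (r : ℝ) (hr : f x ≤ r) : u ≤ l x + r * c := by
    have := hFA (x, r) hr; rwa [F.apply_prod_real] at this
  have hB (x : E) (r : ℝ) (hr : r < k x) : l x + r * c < u := by
    have := hFB (x, r) hr; rwa [F.apply_prod_real] at this
  have huw : u ≤ l w + k w * c := hA w (k w) hw.le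
  have hc : 0 < c := by linarith [hB w (k w - 1) (by linarith)]
  have hwu : l w + k w * c ≤ u := le_of_forall_pos_lt_add fun t ht => by
    have := hB w (k w - t / c) (by linarith [div_pos ht hc])
    rw [sub_mul, div_mul_cancel₀ _ hc.ne'] at this
    linarith
  set p := -c⁻¹ • l
  have hp (x : E) : k w + p (x - w) = (u - l x) / c := by
    simp only [p, smul_apply, smul_eq_mul, map_sub]
    field_simp
    linarith
  refine ⟨p, fun x => ?_, fun x => ?_⟩
  · rw [hw, ← EReal.coe_add, hp]
    refine EReal.coe_le_of_forall_le_coe fun r hr => ?_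
    rw [div_le_iff₀ hc]
    linarith [hA x r hr]
  · rw [hp, le_div_iff₀ hc]
    refine le_of_forall_pos_lt_add fun t ht => ?_
    have := hB x (k x - t / c) (by linarith [div_pos ht hc])
    rw [sub_mul, div_mul_cancel₀ _ hc.ne'] at this
    linarith

end Separation

section Estimates

variable {E : Type*} [NormedAddCommGroup E] [NormedSpace ℝ E]

theorem le_of_forall_pos_le_add_mul {a b c : ℝ} (h : ∀ t : ℝ, 0 < t → t ≤ 1 → a ≤ b + t * c) :
    a ≤ b := by
  have hlim : Tendsto (fun t : ℝ => b + t * c) (𝓝[>] 0) (𝓝 b) := by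
    have : Continuous fun t : ℝ => b + t * c := by fun_prop
    simpa using (this.tendsto 0).mono_left nhdsWithin_le_nhds
  exact ge_of_tendsto hlim
    (by filter_upwards [Ioc_mem_nhdsGT one_pos] with t ht using h t ht.1 ht.2)

theorem norm_le_and_opNorm_le_of_forall_neg_apply_le {g : E →L[ℝ] ℝ} {v : E} {ε : ℝ}
    (hε : 0 ≤ ε) (hg : ∀ d, -g d ≤ (‖v + d‖ ^ 2 - ‖v‖ ^ 2) / 2 + ε * ‖d‖) (hv : 0 ≤ g v) :
    ‖v‖ ≤ ε ∧ ‖g‖ ≤ 2 * ε := by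
  have hdir (d : E) {t : ℝ} (ht : 0 < t) :
      t * g d ≤ (‖v - t • d‖ ^ 2 - ‖v‖ ^ 2) / 2 + t * (ε * ‖d‖) := by
    have := hg (-(t • d))
    rw [map_neg, map_smul, smul_eq_mul, norm_neg, norm_smul, Real.norm_of_nonneg ht.le,
      ← sub_eq_add_neg] at this
    linarith
  have hvε : ‖v‖ ≤ ε := by
    have hsq : ‖v‖ ^ 2 ≤ ε * ‖v‖ :=
        le_of_forall_pos_le_add_mul (c := ‖v‖ ^ 2 / 2) fun t ht ht1 => by
      have h := hdir v ht
      rw [show v - t • v = (1 - t) • v by rw [sub_smul, one_smul], norm_smul,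
        Real.norm_of_nonneg (by linarith)] at h
      have : t * (g v + ‖v‖ ^ 2 - ε * ‖v‖ - t * (‖v‖ ^ 2 / 2)) ≤ t * 0 := by linarith
      linarith [le_of_mul_le_mul_left this ht]
    nlinarith [norm_nonneg v]
  have hbound (d : E) : g d ≤ 2 * ε * ‖d‖ := by
    have : g d ≤ (‖v‖ + ε) * ‖d‖ :=
        le_of_forall_pos_le_add_mul (c := ‖d‖ ^ 2 / 2) fun t ht _ => by
      have h := hdir d ht
      have hn : ‖v - t • d‖ ≤ ‖v‖ + t * ‖d‖ := by
        simpa [norm_smul, Real.norm_of_nonneg ht.le] using norm_sub_le v (t • d)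
      have hsq := pow_le_pow_left₀ (norm_nonneg _) hn 2
      have : t * g d ≤ t * ((‖v‖ + ε) * ‖d‖ + t * (‖d‖ ^ 2 / 2)) := by nlinarith
      exact le_of_mul_le_mul_left this ht
    nlinarith [norm_nonneg d]
  refine ⟨hvε, g.opNorm_le_bound (by positivity) fun d => abs_le.2 ⟨?_, hbound d⟩⟩
  have := hbound (-d)
  rw [map_neg, norm_neg] at this
  linarith

theorem convexOn_univ_norm_sub (z : E) : ConvexOn ℝ univ fun x => ‖x - z‖ := by
  simpa [sub_eq_add_neg, Function.comp_def] using convexOn_univ_norm.translate_left (-z)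

theorem ContinuousLinearMap.le_apply_add_half_sq_norm_sub (L : E →L[ℝ] ℝ) (x y : E) :
    L y - ‖L‖ ^ 2 / 2 ≤ L x + ‖x - y‖ ^ 2 / 2 := by
  have h := (neg_le_abs _).trans (L.le_opNorm (x - y))
  rw [map_sub] at h
  nlinarith [two_mul_le_add_sq ‖L‖ ‖x - y‖]

theorem EProper.exists_le_add_half_sq_norm_sub {f : E → EReal} (hf : EProper f)
    (hconv : EConvex f) (hlsc : LowerSemicontinuous f) (y : E) (q : E →L[ℝ] ℝ) :
    ∃ m : ℝ, ∀ x, (m : EReal) ≤ f x + ((‖x - y‖ ^ 2 / 2 - q x : ℝ) : EReal) := by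
  obtain ⟨l, c, hl⟩ := hf.exists_affine_le hconv hlsc
  refine ⟨(l - q) y - ‖l - q‖ ^ 2 / 2 + c, fun x => ?_⟩
  have := (l - q).le_apply_add_half_sq_norm_sub x y
  rw [sub_apply, sub_apply] at this
  calc (((l - q) y - ‖l - q‖ ^ 2 / 2 + c : ℝ) : EReal)
      ≤ ((l x + c : ℝ) : EReal) + ((‖x - y‖ ^ 2 / 2 - q x : ℝ) : EReal) := by
        rw [← EReal.coe_add, EReal.coe_le_coe_iff, sub_apply]
        linarith
    _ ≤ f x + ((‖x - y‖ ^ 2 / 2 - q x : ℝ) : EReal) := by gcongr; exact hl x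

theorem LowerSemicontinuous.isClosed_setOf_mem_subdiff {f : E → EReal}
    (hf : LowerSemicontinuous f) : IsClosed {xp : E × (E →L[ℝ] ℝ) | xp.2 ∈ Subdiff f xp.1} := by
  have hset : {xp : E × (E →L[ℝ] ℝ) | xp.2 ∈ Subdiff f xp.1} =
      ⋂ z, (fun xp => f xp.1 + ((xp.2 (z - xp.1) : ℝ) : EReal)) ⁻¹' Iic (f z) := by
    ext; simp [Subdiff]
  rw [hset]
  refine isClosed_iInter fun z => ?_
  have hfst : LowerSemicontinuous fun xp : E × (E →L[ℝ] ℝ) => f xp.1 := hf.comp continuous_fst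
  have hc : Continuous fun xp : E × (E →L[ℝ] ℝ) => xp.2 (z - xp.1) := by fun_prop
  exact (hfst.add_coe_of_continuous hc).isClosed_preimage (f z)

end Estimates

theorem exists_mem_subdiff_near {f : X → EReal} (hf : EProper f) (hconv : EConvex f)
    (hlsc : LowerSemicontinuous f) {y : X} {q : X →L[ℝ] ℝ}
    (hmon : ∀ x : X, ∀ p ∈ Subdiff f x, (0 : ℝ) ≤ (p - q) (x - y)) {ε : ℝ} (hε : 0 < ε) :
    ∃ w, ∃ p ∈ Subdiff f w, ‖w - y‖ ≤ ε ∧ ‖p - q‖ ≤ 2 * ε := by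
  set h₀ : X → ℝ := fun x => ‖x - y‖ ^ 2 / 2 - q x
  obtain ⟨m, hm⟩ := hf.exists_le_add_half_sq_norm_sub hconv hlsc y q
  obtain ⟨x₁, hx₁⟩ := hf.1
  obtain ⟨w, hw₁, hw⟩ := exists_forall_le_add_mul_dist_ereal
    (hlsc.add_coe_of_continuous (by fun_prop : Continuous h₀)) hm hε
    (EReal.add_ne_top hx₁ (EReal.coe_ne_top _))
  have hfw : f w ≠ ⊤ := fun h => by
    simp only [h, EReal.top_add_coe, top_le_iff] at hw₁
    exact EReal.add_ne_top hx₁ (EReal.coe_ne_top _) hw₁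
  set r₀ := (f w).toReal
  have hr₀ : f w = r₀ := (EReal.coe_toReal hfw (hf.2 w)).symm
  -- `w` minimises `f + h` with `h` convex and continuous, so `f` lies above the concave
  -- function `r₀ + h w - h` and touches it at `w`.
  set h : X → ℝ := fun x => h₀ x + ε * ‖x - w‖
  have hconvh : ConvexOn ℝ univ h := by
    refine ((((convexOn_univ_norm_sub y).pow (fun _ _ => norm_nonneg _) 2).smul
      (by norm_num : (0 : ℝ) ≤ 1 / 2)).add
      (((-q : X →L[ℝ] ℝ) : X →ₗ[ℝ] ℝ).convexOn convex_univ)).add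
      ((convexOn_univ_norm_sub w).smul hε.le) |>.congr fun x _ => ?_
    simp [h, h₀]
    ring
  have hkf (x : X) : ((r₀ + h w - h x : ℝ) : EReal) ≤ f x := by
    refine EReal.coe_sub_le_iff.2 ?_
    calc ((r₀ + h w : ℝ) : EReal) = f w + (h₀ w : EReal) := by simp [h, hr₀]
      _ ≤ f x + (h₀ x : EReal) + ((ε * dist x w : ℝ) : EReal) := hw x
      _ = f x + (h x : EReal) := by rw [add_assoc, ← EReal.coe_add, dist_eq_norm]
  obtain ⟨p, hp, hpk⟩ := exists_mem_subdiff_of_concaveOn_le (k := fun x => r₀ + h w - h x)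
    hconv.convex_realEpigraph ((concaveOn_const _ convex_univ).sub hconvh) (by fun_prop)
    hkf (w := w) (by simp [hr₀])
  refine ⟨w, p, hp, norm_le_and_opNorm_le_of_forall_neg_apply_le hε.le (fun d => ?_)
    (hmon w p hp)⟩
  have := hpk (w + d)
  simp only [h, h₀, add_sub_cancel_left, sub_self, norm_zero, mul_zero, map_add,
    sub_apply] at this ⊢
  rw [show w + d - y = w - y + d by abel] at this
  linarith

/-- Rockafellar's theorem: the subdifferential of a proper convex lsc function
is maximal monotone. -/
theorem stmt10 (f : X → EReal) (hproper : EProper f) (hconv : EConvex f)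
    (hlsc : LowerSemicontinuous f) (y : X) (q : X →L[ℝ] ℝ)
    (hmon : ∀ x : X, ∀ p ∈ Subdiff f x, (0 : ℝ) ≤ (p - q) (x - y)) :
    q ∈ Subdiff f y := by
  suffices (y, q) ∈ closure {xp : X × (X →L[ℝ] ℝ) | xp.2 ∈ Subdiff f xp.1} by
    rwa [hlsc.isClosed_setOf_mem_subdiff.closure_eq] at this
  refine Metric.mem_closure_iff.2 fun δ hδ => ?_
  obtain ⟨w, p, hp, hw, hpq⟩ := exists_mem_subdiff_near hproper hconv hlsc hmon
    (by positivity : 0 < δ / 4)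
  refine ⟨(w, p), hp, ?_⟩
  rw [Prod.dist_eq, dist_comm, dist_eq_norm, dist_comm q, dist_eq_norm]
  exact max_lt (by linarith) (by linarith)
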